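/- arXiv:math/0509127 — 3 statements merged into one kernel-verified Lean document; each statement's English description precedes it below -/
import Mathlib

section
/- Let G=(V,E) be a finite graph without loops and q ∈ {2,3,…}. For every vector m=(m_e : e∈E) of non-negative integers, Σ_{σ∈{1,…,q}^V} Π_{e∈E} (q δ_e(σ) − 1)^{m_e} = q^{|V|} C(G_m;q), where δ_e(σ)=1 if the endvertices of e receive equal values under σ and 0 otherwise. -/
open scoped BigOperators symmDiff Classical

noncomputable section FlowsAndFerromagnets

/-- The number of non-zero mod-`q` flows on the (multi)graph with vertex type `V`,
edge-index type `ι`, and a fixed orientation in which edge `i` leaves `s i` and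
arrives at `t i`.  A mod-`q` flow assigns a value of `ZMod q` to every oriented edge
so that, at every vertex, the total flow leaving equals the total flow arriving
(mod `q`); it is non-zero if no edge carries the value `0`. -/
def flowCount (V : Type) [Fintype V] [DecidableEq V] {ι : Type} [Fintype ι]
    (s t : ι → V) (q : ℕ) : ℕ :=
  Nat.card {f : ι → ZMod q //
    (∀ i, f i ≠ 0) ∧
    ∀ v : V, (∑ i, if s i = v then f i else 0) = (∑ i, if t i = v then f i else 0)}

/-- `C(G_m; q)`: the number of non-zero mod-`q` flows on the multigraph `G_m`
obtained from `G` (edges indexed by `E`, with endpoints `s e`, `t e`) by replacing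
each edge `e` by `m e` parallel copies. -/
def flowCountM {V E : Type} [Fintype V] [DecidableEq V] [Fintype E]
    (s t : E → V) (m : E → ℕ) (q : ℕ) : ℕ :=
  flowCount V (fun x : Σ e : E, Fin (m e) => s x.1) (fun x : Σ e : E, Fin (m e) => t x.1) q

/-- `C(G_m^{x,y}; q)`: the number of non-zero mod-`q` flows on the multigraph `G_m`
augmented by one extra edge joining `x` and `y`. -/
def flowCountMxy {V E : Type} [Fintype V] [DecidableEq V] [Fintype E]
    (s t : E → V) (m : E → ℕ) (x y : V) (q : ℕ) : ℕ :=
  flowCount V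
    (fun o : Option (Σ e : E, Fin (m e)) => o.elim x (fun z => s z.1))
    (fun o : Option (Σ e : E, Fin (m e)) => o.elim y (fun z => t z.1)) q

/-- The Poisson weight `∏_e e^{-λ_e} λ_e^{m_e} / m_e!` of a vector of edge multiplicities. -/
def poissonWt {E : Type} [Fintype E] (lam : E → ℝ) (m : E → ℕ) : ℝ :=
  ∏ e, Real.exp (-lam e) * lam e ^ (m e) / (Nat.factorial (m e))

/-- Expectation `E_λ(f(P))` with respect to independent Poisson multiplicities `P e`
of mean `lam e`. -/
def poissonExp {E : Type} [Fintype E] (lam : E → ℝ) (f : (E → ℕ) → ℝ) : ℝ :=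
  ∑' m : E → ℕ, poissonWt lam m * f m

/-- Probability `P_λ(P ∈ A)` with respect to independent Poisson multiplicities. -/
def poissonProb {E : Type} [Fintype E] (lam : E → ℝ) (A : (E → ℕ) → Prop) : ℝ :=
  ∑' m : E → ℕ, poissonWt lam m * (if A m then 1 else 0)

/-- Probability of an event for two independent families of independent Poisson
multiplicities. -/
def poissonProb2 {E : Type} [Fintype E] (lam : E → ℝ)
    (A : (E → ℕ) → (E → ℕ) → Prop) : ℝ :=
  ∑' m : E → ℕ, ∑' m' : E → ℕ,
    poissonWt lam m * poissonWt lam m' * (if A m m' then 1 else 0)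

/-- The (unnormalised) Potts weight `exp(∑_e β J_e (q δ_e(σ) - 1))` of a spin
configuration `σ`. -/
def pottsWt {V E : Type} [Fintype E] (s t : E → V) (q : ℕ) (β : ℝ) (J : E → ℝ)
    (σ : V → Fin q) : ℝ :=
  Real.exp (∑ e, β * J e * ((q : ℝ) * (if σ (s e) = σ (t e) then 1 else 0) - 1))

/-- The Potts partition function `Z_P`. -/
def pottsZ (V : Type) {E : Type} [Fintype V] [DecidableEq V] [Fintype E]
    (s t : E → V) (q : ℕ) (β : ℝ) (J : E → ℝ) : ℝ :=
  ∑ σ : V → Fin q, pottsWt s t q β J σ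

/-- The Potts two-point function `σ(x,y) = ∑_σ (q δ_{σ_x,σ_y} - 1) π(σ)`. -/
def pottsTwoPoint {V E : Type} [Fintype V] [DecidableEq V] [Fintype E]
    (s t : E → V) (q : ℕ) (β : ℝ) (J : E → ℝ) (x y : V) : ℝ :=
  (∑ σ : V → Fin q, ((q : ℝ) * (if σ x = σ y then 1 else 0) - 1) * pottsWt s t q β J σ)
    / pottsZ V s t q β J

/-- The degree of the vertex `v` in the multigraph `G_m`. -/
def mDeg {V E : Type} [Fintype E] [DecidableEq V] (s t : E → V) (m : E → ℕ) (v : V) : ℕ :=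
  ∑ e, m e * ((if s e = v then 1 else 0) + (if t e = v then 1 else 0))

/-- The multigraph `G_m` is even: every vertex has even degree. -/
def IsEvenM {V E : Type} [Fintype E] [DecidableEq V] (s t : E → V) (m : E → ℕ) : Prop :=
  ∀ v : V, Even (mDeg s t m v)

/-- The multigraph `G_m^{x,y}` (with one extra edge joining `x` and `y`) is even. -/
def IsEvenMxy {V E : Type} [Fintype E] [DecidableEq V] (s t : E → V) (m : E → ℕ)
    (x y : V) : Prop :=
  ∀ v : V, Even (mDeg s t m v + (if v = x then 1 else 0) + (if v = y then 1 else 0))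

/-- The source set `∂m` of a vector of multiplicities: the set of vertices of odd
degree in `G_m`. -/
def sources {V E : Type} [Fintype E] [DecidableEq V] (s t : E → V) (m : E → ℕ) : Set V :=
  {v : V | Odd (mDeg s t m v)}

/-- The simple graph on `V` induced by the edges `e` satisfying `pred e`. -/
def openGraph {V E : Type} (s t : E → V) (pred : E → Prop) : SimpleGraph V :=
  SimpleGraph.fromRel (fun a b => ∃ e, pred e ∧ s e = a ∧ t e = b)

/-- `x ↔ y in m`: `x` and `y` lie in the same component of `(V, {e : m e ≥ 1})`. -/
def ConnectedIn {V E : Type} (s t : E → V) (m : E → ℕ) (x y : V) : Prop :=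
  (openGraph s t fun e => m e ≠ 0).Reachable x y

/-- `x ↔ y` in the percolation configuration `ω`. -/
def ConnectedInB {V E : Type} (s t : E → V) (ω : E → Bool) (x y : V) : Prop :=
  (openGraph s t fun e => ω e = true).Reachable x y

/-- The number of connected components of the graph `(V, {e : pred e})`
(isolated vertices count). -/
def numComp {V E : Type} [Fintype V] (s t : E → V) (pred : E → Prop) : ℕ :=
  Nat.card (openGraph s t pred).ConnectedComponent

/-- Product (percolation) weight of a configuration, with edge densities `p`. -/
def percWt {E : Type} [Fintype E] (p : E → ℝ) (ω : E → Bool) : ℝ :=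
  ∏ e, if ω e then p e else 1 - p e

/-- Random-cluster weight of the configuration `ω`. -/
def rcWt {V E : Type} [Fintype V] [Fintype E] (s t : E → V) (p : E → ℝ) (q : ℝ)
    (ω : E → Bool) : ℝ :=
  percWt p ω * q ^ numComp s t (fun e => ω e = true)

/-- Random-cluster probability `φ_{p,q}(A)` of an event `A`. -/
def rcProb {V E : Type} [Fintype V] [Fintype E] (s t : E → V) (p : E → ℝ) (q : ℝ)
    (A : (E → Bool) → Prop) : ℝ :=
  (∑ ω : E → Bool, if A ω then rcWt s t p q ω else 0) / (∑ ω : E → Bool, rcWt s t p q ω)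

/-- The Whitney rank-generating function `W(u,v) = ∑_{F' ⊆ F} u^{r(F')} v^{c(F')}`
of the multigraph with vertex type `V` and edge-index type `ι`, where
`r(F') = |V| - k(F')` and `c(F') = |F'| - |V| + k(F')`. -/
def whitney (V : Type) [Fintype V] {ι : Type} [Fintype ι] (s t : ι → V) (u v : ℝ) : ℝ :=
  ∑ F : Finset ι,
    u ^ (Fintype.card V - numComp s t (· ∈ F)) *
      v ^ (F.card - (Fintype.card V - numComp s t (· ∈ F)))

/-- `F_q(G_m) = (-1)^{|edges| + |V| - 1} W_{G_m}(-1, -q)`, a real-`q` version of the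
flow polynomial of the multigraph `G_m`. -/
def flowPolyW {V E : Type} [Fintype V] [Fintype E] (s t : E → V) (q : ℝ) (m : E → ℕ) : ℝ :=
  (-1 : ℝ) ^ ((∑ e, m e) + Fintype.card V - 1) *
    whitney V (fun x : Σ e : E, Fin (m e) => s x.1) (fun x : Σ e : E, Fin (m e) => t x.1)
      (-1) (-q)

/-- `F_q(G_m^{x,y})`: as `flowPolyW`, for the multigraph `G_m` with one extra edge
joining `x` and `y`. -/
def flowPolyWxy {V E : Type} [Fintype V] [Fintype E] (s t : E → V) (q : ℝ) (m : E → ℕ)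
    (x y : V) : ℝ :=
  (-1 : ℝ) ^ (((∑ e, m e) + 1) + Fintype.card V - 1) *
    whitney V (fun o : Option (Σ e : E, Fin (m e)) => o.elim x (fun z => s z.1))
      (fun o : Option (Σ e : E, Fin (m e)) => o.elim y (fun z => t z.1)) (-1) (-q)

end FlowsAndFerromagnets

/-!
For a primitive additive character `ψ` of `ZMod q`, orthogonality gives
`q [x = y] - 1 = ∑_{a ≠ 0} ψ (a (x - y))`. Multiplying these out over the edges of `G_m`
turns the left-hand side into a sum over nowhere-zero labellings `f` of the edges, and
summation by parts rewrites `∑_i f_i (σ (s i) - σ (t i))` as `∑_v σ_v ∂f(v)`, where `∂f(v)`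
is the net outflow of `f` at `v`. The sum over `σ` then factors over the vertices and is
`q ^ |V|` when `∂f = 0`, i.e. when `f` is a flow, and `0` otherwise.
-/

open Finset

namespace AddChar

variable {A M : Type*} [AddCommMonoid A] [CommMonoid M]

lemma map_sum_eq_prod {ι : Type*} (ψ : AddChar A M) (s : Finset ι) (g : ι → A) :
    ψ (∑ i ∈ s, g i) = ∏ i ∈ s, ψ (g i) := by
  induction s using Finset.induction with
  | empty => simp
  | insert a s ha ih => rw [sum_insert ha, prod_insert ha, map_add_eq_mul, ih]

variable {R K : Type*} [CommRing R] [Fintype R] [DecidableEq R] [CommRing K] [IsDomain K]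
  {ψ : AddChar R K}

lemma sum_erase_zero_mulShift (hψ : ψ.IsPrimitive) (d : R) :
    ∑ a ∈ univ.erase (0 : R), ψ (a * d) =
      (Fintype.card R : K) * (if d = 0 then 1 else 0) - 1 := by
  have h := sum_erase_add univ (fun a => ψ (a * d)) (mem_univ 0)
  rw [sum_mulShift d hψ, zero_mul, map_zero_eq_one] at h
  rw [eq_sub_iff_add_eq, h]
  split_ifs <;> simp

lemma sum_pi_mul_eq_ite {V : Type*} [Fintype V] [DecidableEq V] (hψ : ψ.IsPrimitive)
    (c : V → R) :
    ∑ σ : V → R, ψ (∑ v, σ v * c v) =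
      if c = 0 then (Fintype.card R : K) ^ Fintype.card V else 0 := by
  simp_rw [map_sum_eq_prod, ← Fintype.prod_sum (fun v x => ψ (x * c v)), sum_mulShift _ hψ]
  split_ifs with hc
  · simp [hc]
  · obtain ⟨v, hv⟩ : ∃ v, c v ≠ 0 := Function.ne_iff.mp hc
    exact prod_eq_zero (mem_univ v) (by rw [if_neg hv, Nat.cast_zero])

end AddChar

section Flows

variable {V ι R : Type*} [Fintype V] [DecidableEq V] [Fintype ι] [CommRing R]

def netOutflow (s t : ι → V) (f : ι → R) (v : V) : R :=
  (∑ i, if s i = v then f i else 0) - ∑ i, if t i = v then f i else 0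

lemma sum_mul_sub_eq_sum_mul_netOutflow (s t : ι → V) (f : ι → R) (σ : V → R) :
    ∑ i, f i * (σ (s i) - σ (t i)) = ∑ v, σ v * netOutflow s t f v := by
  simp only [netOutflow, mul_sub, sum_sub_distrib, mul_sum, mul_ite, mul_zero]
  rw [sum_comm (s := univ (α := V)), sum_comm (s := univ (α := V))]
  simp only [sum_ite_eq, mem_univ, if_true, mul_comm]

theorem sum_prod_ite_sub_one_eq_card_mul_card_flows [Fintype R] [DecidableEq R]
    {K : Type*} [CommRing K] [IsDomain K] {ψ : AddChar R K} (hψ : ψ.IsPrimitive)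
    (s t : ι → V) :
    ∑ σ : V → R, ∏ i, ((Fintype.card R : K) * (if σ (s i) = σ (t i) then 1 else 0) - 1) =
      (Fintype.card R : K) ^ Fintype.card V *
        #{f : ι → R | (∀ i, f i ≠ 0) ∧ netOutflow s t f = 0} := by
  calc
    _ = ∑ σ : V → R, ∑ f ∈ Fintype.piFinset fun _ : ι => univ.erase (0 : R),
          ψ (∑ v, σ v * netOutflow s t f v) := by
      refine sum_congr rfl fun σ _ => ?_
      simp_rw [← sub_eq_zero (a := σ (s _)), ← AddChar.sum_erase_zero_mulShift hψ,
        prod_univ_sum, ← AddChar.map_sum_eq_prod, sum_mul_sub_eq_sum_mul_netOutflow]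
    _ = ∑ f ∈ Fintype.piFinset fun _ : ι => univ.erase (0 : R),
          if netOutflow s t f = 0 then (Fintype.card R : K) ^ Fintype.card V else 0 := by
      rw [sum_comm]
      exact sum_congr rfl fun f _ => AddChar.sum_pi_mul_eq_ite hψ _
    _ = _ := by
      rw [← sum_filter, sum_const, nsmul_eq_mul, mul_comm]
      congr 3
      ext f
      simp [Fintype.mem_piFinset]

end Flows

lemma flowCount_eq_card_filter {V ι : Type} [Fintype V] [DecidableEq V] [Fintype ι]
    (s t : ι → V) (q : ℕ) [NeZero q] :
    flowCount V s t q = #{f : ι → ZMod q | (∀ i, f i ≠ 0) ∧ netOutflow s t f = 0} := by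
  simp only [flowCount, netOutflow, sub_eq_zero, funext_iff, Pi.zero_apply]
  rw [Nat.card_eq_fintype_card, Fintype.card_subtype]

lemma Fintype.prod_pow_eq_prod_sigma_fin {E M : Type*} [Fintype E] [CommMonoid M]
    (x : E → M) (m : E → ℕ) : ∏ e, x e ^ m e = ∏ i : Σ e, Fin (m e), x i.1 := by
  simp [Fintype.prod_sigma]

theorem potts_product_sum_eq_flow_count_general
    (V E : Type) [Fintype V] [DecidableEq V] [Fintype E]
    (s t : E → V)
    (q : ℕ) (hq : 2 ≤ q) (m : E → ℕ) :
    (∑ σ : V → Fin q, ∏ e, ((q : ℤ) * (if σ (s e) = σ (t e) then 1 else 0) - 1) ^ (m e))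
      = (q : ℤ) ^ (Fintype.card V) * (flowCountM s t m q : ℤ) := by
  have : NeZero q := ⟨by omega⟩
  have key := sum_prod_ite_sub_one_eq_card_mul_card_flows (ZMod.isPrimitive_stdAddChar q)
    (fun i : Σ e, Fin (m e) => s i.1) (fun i => t i.1)
  rw [ZMod.card] at key
  rw [flowCountM, flowCount_eq_card_filter]
  apply Int.cast_injective (α := ℂ)
  push_cast [apply_ite (Int.cast : ℤ → ℂ)]
  rw [← key, ← ((Equiv.refl V).arrowCongr (ZMod.finEquiv q).toEquiv).sum_comp]
  simp [Fintype.prod_pow_eq_prod_sigma_fin]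

/-- For every vector `m` of edge multiplicities,
`∑_{σ ∈ {1,…,q}^V} ∏_{e ∈ E} (q δ_e(σ) - 1)^{m_e} = q^{|V|} C(G_m; q)`. -/
theorem potts_product_sum_eq_flow_count
    (V E : Type) [Fintype V] [DecidableEq V] [Fintype E]
    (s t : E → V) (hloop : ∀ e, s e ≠ t e)
    (q : ℕ) (hq : 2 ≤ q) (m : E → ℕ) :
    (∑ σ : V → Fin q, ∏ e, ((q : ℤ) * (if σ (s e) = σ (t e) then 1 else 0) - 1) ^ (m e))
      = (q : ℤ) ^ (Fintype.card V) * (flowCountM s t m q : ℤ) :=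
  potts_product_sum_eq_flow_count_general V E s t q hq m
end

section
/- Let G=(V,E) be a finite graph without loops, q ∈ {2,3,…}, β > 0, J=(J_e : e∈E) non-negative reals, and set λ_e = βJ_e. Then for distinct x,y ∈ V, exp(−β Σ_{e∈E} J_e) · Σ_{σ∈{1,…,q}^V} (q δ_{σ_x,σ_y} − 1) exp(Σ_{e∈E} βJ_e (q δ_e(σ) − 1)) = q^{|V|} E_λ(C(G_P^{x,y};q)). -/
open scoped BigOperators symmDiff Classical

/- ### Auxiliary lemmas for the proof -/

section AuxFlows

open Finset

private lemma prod_sum_pi' {ι κ M : Type*} [Fintype ι] [DecidableEq ι] [Fintype κ]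
    [CommSemiring M] (f : ι → κ → M) :
    (∏ i, ∑ j, f i j) = ∑ x : ι → κ, ∏ i, f i (x i) := by
  rw [Finset.prod_univ_sum (fun _ => (univ : Finset κ)) f, Fintype.piFinset_univ]

private lemma addChar_map_sum' {A M ι : Type*} [AddCommMonoid A] [CommMonoid M] (ψ : AddChar A M)
    (s : Finset ι) (g : ι → A) : ψ (∑ i ∈ s, g i) = ∏ i ∈ s, ψ (g i) := by
  classical
  induction s using Finset.cons_induction with
  | empty => simp
  | cons a s ha ih => rw [Finset.sum_cons, Finset.prod_cons, AddChar.map_add_eq_mul, ih]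

private lemma sum_ite_nat_card' {α : Type*} [Fintype α] (P : α → Prop) [DecidablePred P] (c : ℂ) :
    ∑ a : α, (if P a then c else 0) = (Nat.card {a // P a} : ℂ) * c := by
  classical
  rw [← Finset.sum_filter, Finset.sum_const, nsmul_eq_mul,
    Nat.card_eq_fintype_card, Fintype.card_subtype]

set_option maxHeartbeats 1000000 in
private lemma flow_char_sum' (V : Type) [Fintype V] [DecidableEq V] {ι : Type} [Fintype ι]
    (S T : ι → V) (q : ℕ) [NeZero q] :
    ∑ σ : V → ZMod q, ∏ i, ((q : ℂ) * (if σ (S i) = σ (T i) then 1 else 0) - 1)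
      = (q : ℂ) ^ (Fintype.card V) * (flowCount V S T q : ℂ) := by
  haveI : DecidableEq ι := Classical.decEq ι
  set ψ := ZMod.stdAddChar (N := q) with hψdef
  have hψ : ψ.IsPrimitive := ZMod.isPrimitive_stdAddChar q
  have hsum : ∀ b : ZMod q, ∑ n : ZMod q, ψ (n * b) = if b = 0 then (q : ℂ) else 0 := by
    intro b
    rw [AddChar.sum_mulShift b hψ, ZMod.card]
    split <;> simp
  have hdelta : ∀ a b : ZMod q,
      ((q : ℂ) * (if a = b then 1 else 0) - 1)
        = ∑ n : ZMod q, (if n = 0 then 0 else ψ (n * (a - b))) := by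
    intro a b
    have h1 : ∀ n : ZMod q, (if n = 0 then (0:ℂ) else ψ (n * (a - b)))
        = ψ (n * (a - b)) - (if n = 0 then ψ (n * (a - b)) else 0) := by
      intro n; split <;> simp
    rw [Finset.sum_congr rfl (fun n _ => h1 n), Finset.sum_sub_distrib, hsum,
      Finset.sum_ite_eq' univ (0 : ZMod q) (fun n => ψ (n * (a - b)))]
    simp only [mem_univ, if_true, zero_mul, AddChar.map_zero_eq_one]
    by_cases hab : a = b
    · simp [hab]
    · rw [if_neg hab, if_neg (fun h => hab (sub_eq_zero.mp h))]
      simp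
  calc ∑ σ : V → ZMod q, ∏ i, ((q : ℂ) * (if σ (S i) = σ (T i) then 1 else 0) - 1)
      = ∑ σ : V → ZMod q, ∑ f : ι → ZMod q,
          ∏ i, (if f i = 0 then 0 else ψ (f i * (σ (S i) - σ (T i)))) := by
        refine Finset.sum_congr rfl fun σ _ => ?_
        rw [Finset.prod_congr rfl (fun i _ => hdelta (σ (S i)) (σ (T i))),
          prod_sum_pi']
    _ = ∑ f : ι → ZMod q, ∑ σ : V → ZMod q,
          ∏ i, (if f i = 0 then 0 else ψ (f i * (σ (S i) - σ (T i)))) := Finset.sum_comm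
    _ = ∑ f : ι → ZMod q,
          (if (∀ i, f i ≠ 0) ∧ (∀ v : V, (∑ i, if S i = v then f i else 0)
              = (∑ i, if T i = v then f i else 0)) then (q : ℂ) ^ (Fintype.card V) else 0) := by
        refine Finset.sum_congr rfl fun f _ => ?_
        by_cases hf : ∀ i, f i ≠ 0
        · -- all values nonzero
          have hprod : ∀ σ : V → ZMod q,
              (∏ i, (if f i = 0 then (0:ℂ) else ψ (f i * (σ (S i) - σ (T i)))))
                = ∏ v, ψ (((∑ i, if S i = v then f i else 0)
                    - (∑ i, if T i = v then f i else 0)) * σ v) := by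
            intro σ
            rw [Finset.prod_congr rfl (fun i _ => if_neg (hf i)), ← addChar_map_sum',
              ← addChar_map_sum']
            congr 1
            have hterm : ∀ i, f i * (σ (S i) - σ (T i))
                = ∑ v, ((if S i = v then f i else 0) - (if T i = v then f i else 0)) * σ v := by
              intro i
              have hs : ∑ v, (if S i = v then f i else 0) * σ v = f i * σ (S i) := by
                rw [Finset.sum_congr rfl (fun v _ => by rw [ite_mul, zero_mul])]
                simpa using Finset.sum_ite_eq univ (S i) (fun v => f i * σ v)
              have ht : ∑ v, (if T i = v then f i else 0) * σ v = f i * σ (T i) := by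
                rw [Finset.sum_congr rfl (fun v _ => by rw [ite_mul, zero_mul])]
                simpa using Finset.sum_ite_eq univ (T i) (fun v => f i * σ v)
              rw [Finset.sum_congr rfl (fun v _ => sub_mul _ _ _), Finset.sum_sub_distrib,
                hs, ht, mul_sub]
            rw [Finset.sum_congr rfl (fun i _ => hterm i), Finset.sum_comm]
            refine Finset.sum_congr rfl fun v _ => ?_
            rw [← Finset.sum_mul, Finset.sum_sub_distrib]
          have step : (∑ σ : V → ZMod q,
              ∏ i, (if f i = 0 then (0:ℂ) else ψ (f i * (σ (S i) - σ (T i)))))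
              = ∏ v : V, (if ((∑ i, if S i = v then f i else 0)
                  = (∑ i, if T i = v then f i else 0)) then (q : ℂ) else 0) := by
            have hv : ∀ v : V, (∑ k : ZMod q, ψ (((∑ i, if S i = v then f i else 0)
                  - (∑ i, if T i = v then f i else 0)) * k))
                = if ((∑ i, if S i = v then f i else 0)
                    = (∑ i, if T i = v then f i else 0)) then (q : ℂ) else 0 := by
              intro v
              rw [Finset.sum_congr rfl (fun k _ => by rw [mul_comm]), hsum]
              simp only [sub_eq_zero]
            calc (∑ σ : V → ZMod q,
                ∏ i, (if f i = 0 then (0:ℂ) else ψ (f i * (σ (S i) - σ (T i)))))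
                = ∑ σ : V → ZMod q, ∏ v : V, ψ (((∑ i, if S i = v then f i else 0)
                    - (∑ i, if T i = v then f i else 0)) * σ v) :=
                  Finset.sum_congr rfl (fun σ _ => hprod σ)
              _ = ∏ v : V, ∑ k : ZMod q, ψ (((∑ i, if S i = v then f i else 0)
                    - (∑ i, if T i = v then f i else 0)) * k) :=
                  (prod_sum_pi' fun v k => ψ (((∑ i, if S i = v then f i else 0)
                    - (∑ i, if T i = v then f i else 0)) * k)).symm
              _ = ∏ v : V, (if ((∑ i, if S i = v then f i else 0)
                  = (∑ i, if T i = v then f i else 0)) then (q : ℂ) else 0) :=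
                  Finset.prod_congr rfl (fun v _ => hv v)
          rw [step]
          by_cases hflow : ∀ v : V, (∑ i, if S i = v then f i else 0)
              = (∑ i, if T i = v then f i else 0)
          · rw [if_pos ⟨hf, hflow⟩, Finset.prod_congr rfl (fun v _ => if_pos (hflow v)),
              Finset.prod_const, Finset.card_univ]
          · obtain ⟨v0, hv0⟩ := not_forall.mp hflow
            rw [if_neg (fun hP => hv0 (hP.2 v0))]
            exact Finset.prod_eq_zero (mem_univ v0) (if_neg hv0)
        · obtain ⟨i0, hi0⟩ := not_forall.mp hf
          rw [Classical.not_not] at hi0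
          rw [if_neg (fun hP => hP.1 i0 hi0)]
          exact Finset.sum_eq_zero fun σ _ =>
            Finset.prod_eq_zero (mem_univ i0) (by rw [if_pos hi0])
    _ = (q : ℂ) ^ (Fintype.card V) * (flowCount V S T q : ℂ) :=
      by
        have h := sum_ite_nat_card' (fun f : ι → ZMod q => (∀ i, f i ≠ 0) ∧
          ∀ v : V, (∑ i, if S i = v then f i else 0) = (∑ i, if T i = v then f i else 0))
          ((q : ℂ) ^ Fintype.card V)
        exact h.trans (mul_comm _ _)

private lemma pi_tsum_prod_aux' : ∀ (n : ℕ) (f : Fin n → ℕ → ℝ),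
    (∀ i, Summable fun k => |f i k|) →
    Summable (fun m : Fin n → ℕ => |∏ i, f i (m i)|) ∧
    (∑' m : Fin n → ℕ, ∏ i, f i (m i)) = ∏ i, ∑' k, f i k := by
  intro n
  induction n with
  | zero =>
    intro f _
    constructor
    · exact (hasSum_single (default : Fin 0 → ℕ)
        (fun b hb => absurd (Subsingleton.elim b default) hb)).summable
    · simp only [Finset.univ_eq_empty, Finset.prod_empty]
      exact tsum_eq_single default (fun b hb => absurd (Subsingleton.elim b default) hb) |>.trans
        rfl
  | succ n ih =>
    intro f hf
    set e : (ℕ × (Fin n → ℕ)) ≃ (Fin (n+1) → ℕ) := Fin.consEquiv (fun _ => ℕ) with he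
    have key : ∀ p : ℕ × (Fin n → ℕ), (∏ i, f i (e p i))
        = f 0 p.1 * ∏ i : Fin n, f i.succ (p.2 i) := by
      intro p
      rw [Fin.prod_univ_succ]
      simp [he, Fin.consEquiv]
    obtain ⟨ihS, ihT⟩ := ih (fun i => f i.succ) (fun i => hf i.succ)
    have h0 := hf 0
    have hS2 : Summable (fun p : ℕ × (Fin n → ℕ) =>
        |f 0 p.1| * |∏ i : Fin n, f i.succ (p.2 i)|) :=
      Summable.mul_of_nonneg (f := fun k => |f 0 k|)
        (g := fun m : Fin n → ℕ => |∏ i : Fin n, f i.succ (m i)|) h0 ihS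
        (fun _ => abs_nonneg _) (fun _ => abs_nonneg _)
    constructor
    · rw [← e.summable_iff]
      exact hS2.congr fun p => by
        simp only [Function.comp]
        rw [key p, abs_mul]
    · rw [← e.tsum_eq]
      have h1 : (∑' p : ℕ × (Fin n → ℕ), ∏ i, f i (e p i))
          = ∑' p : ℕ × (Fin n → ℕ), f 0 p.1 * ∏ i : Fin n, f i.succ (p.2 i) :=
        tsum_congr key
      have h2 : (∑' k, f 0 k) * (∑' m : Fin n → ℕ, ∏ i : Fin n, f i.succ (m i))
          = ∑' p : ℕ × (Fin n → ℕ), f 0 p.1 * ∏ i : Fin n, f i.succ (p.2 i) :=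
        tsum_mul_tsum_of_summable_norm (f := fun k => f 0 k)
          (g := fun m : Fin n → ℕ => ∏ i : Fin n, f i.succ (m i))
          (by simpa only [Real.norm_eq_abs] using h0)
          (by simpa only [Real.norm_eq_abs] using ihS)
      rw [h1, ← h2, ihT, Fin.prod_univ_succ]

private lemma pi_tsum_prod' {ι : Type} [Fintype ι] (f : ι → ℕ → ℝ)
    (hf : ∀ i, Summable fun k => |f i k|) :
    Summable (fun m : ι → ℕ => |∏ i, f i (m i)|) ∧
    (∑' m : ι → ℕ, ∏ i, f i (m i)) = ∏ i, ∑' k, f i k := by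
  classical
  set n := Fintype.card ι
  set eι : ι ≃ Fin n := Fintype.equivFin ι with heι
  set eP : (Fin n → ℕ) ≃ (ι → ℕ) := Equiv.arrowCongr eι.symm (Equiv.refl ℕ) with heP
  have key : ∀ m : Fin n → ℕ, (∏ i, f i (eP m i)) = ∏ j : Fin n, f (eι.symm j) (m j) := by
    intro m
    rw [← Equiv.prod_comp eι.symm (fun i => f i (eP m i))]
    refine Finset.prod_congr rfl fun j _ => ?_
    simp [heP, Equiv.arrowCongr]
  obtain ⟨hS, hT⟩ := pi_tsum_prod_aux' n (fun j => f (eι.symm j)) (fun j => hf _)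
  constructor
  · rw [← eP.summable_iff]
    exact hS.congr fun m => by
      simp only [Function.comp]
      rw [key m]
  · rw [← eP.tsum_eq, tsum_congr key, hT, Equiv.prod_comp eι.symm (fun i => ∑' k, f i k)]

private lemma key_real' {V E : Type} [Fintype V] [DecidableEq V] [Fintype E]
    (s t : E → V) (q : ℕ) [NeZero q] (x y : V) (m : E → ℕ) :
    ∑ σ : V → Fin q, (((q:ℝ) * (if σ x = σ y then 1 else 0) - 1) *
        ∏ e, ((q:ℝ) * (if σ (s e) = σ (t e) then 1 else 0) - 1) ^ (m e))
      = (q:ℝ) ^ (Fintype.card V) * (flowCountMxy s t m x y q : ℝ) := by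
  classical
  set S : Option (Σ e : E, Fin (m e)) → V := fun o => o.elim x (fun z => s z.1) with hS
  set T : Option (Σ e : E, Fin (m e)) → V := fun o => o.elim y (fun z => t z.1) with hT
  have hre : ∀ σ : V → Fin q, (((q:ℝ) * (if σ x = σ y then 1 else 0) - 1) *
      ∏ e, ((q:ℝ) * (if σ (s e) = σ (t e) then 1 else 0) - 1) ^ (m e))
      = ∏ i : Option (Σ e : E, Fin (m e)),
          ((q:ℝ) * (if σ (S i) = σ (T i) then 1 else 0) - 1) := by
    intro σ
    rw [Fintype.prod_option]
    have hnone : ((q:ℝ) * (if σ (S none) = σ (T none) then 1 else 0) - 1)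
        = ((q:ℝ) * (if σ x = σ y then 1 else 0) - 1) := by simp [hS, hT]
    have hsome : ∀ z : Σ e : E, Fin (m e),
        ((q:ℝ) * (if σ (S (some z)) = σ (T (some z)) then 1 else 0) - 1)
        = ((q:ℝ) * (if σ (s z.1) = σ (t z.1) then 1 else 0) - 1) := by
      intro z; simp [hS, hT]
    rw [hnone, Finset.prod_congr rfl (fun z (_ : z ∈ Finset.univ) => hsome z)]
    congr 1
    rw [← Finset.univ_sigma_univ, Finset.prod_sigma]
    refine Finset.prod_congr rfl fun e' _ => ?_
    simp [Finset.prod_const, Finset.card_univ]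
  have eqv : Fin q ≃ ZMod q := (Fintype.equivFinOfCardEq (ZMod.card q)).symm
  have hswap : (∑ σ : V → Fin q, ∏ i : Option (Σ e : E, Fin (m e)),
        ((q:ℝ) * (if σ (S i) = σ (T i) then 1 else 0) - 1))
      = ∑ τ : V → ZMod q, ∏ i : Option (Σ e : E, Fin (m e)),
          ((q:ℝ) * (if τ (S i) = τ (T i) then 1 else 0) - 1) := by
    refine Fintype.sum_equiv (Equiv.arrowCongr (Equiv.refl V) eqv) _ _ fun σ => ?_
    refine Finset.prod_congr rfl fun i _ => ?_
    simp [Equiv.arrowCongr, EmbeddingLike.apply_eq_iff_eq]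
  have hcast : (∑ τ : V → ZMod q, ∏ i : Option (Σ e : E, Fin (m e)),
        ((q:ℝ) * (if τ (S i) = τ (T i) then 1 else 0) - 1))
      = (q:ℝ) ^ (Fintype.card V) * (flowCount V S T q : ℝ) := by
    have h := flow_char_sum' V S T q
    apply Complex.ofReal_injective
    push_cast [apply_ite ((↑·) : ℝ → ℂ)]
    exact_mod_cast h
  rw [Finset.sum_congr rfl (fun σ _ => hre σ), hswap, hcast]
  rfl

end AuxFlows

/-- `exp(-β ∑_e J_e) · ∑_σ (q δ_{σ_x,σ_y} - 1) exp(∑_e β J_e (q δ_e(σ) - 1))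
  = q^{|V|} E_λ(C(G_P^{x,y}; q))` where `λ_e = β J_e`. -/
theorem potts_numerator_eq_flow_expectation
    (V E : Type) [Fintype V] [DecidableEq V] [Fintype E]
    (s t : E → V) (hloop : ∀ e, s e ≠ t e)
    (q : ℕ) (hq : 2 ≤ q) (β : ℝ) (hβ : 0 < β)
    (J : E → ℝ) (hJ : ∀ e, 0 ≤ J e)
    (lam : E → ℝ) (hlam : ∀ e, lam e = β * J e)
    (x y : V) (hxy : x ≠ y) :
    Real.exp (-(β * ∑ e, J e)) *
        (∑ σ : V → Fin q, ((q : ℝ) * (if σ x = σ y then 1 else 0) - 1) * pottsWt s t q β J σ)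
      = (q : ℝ) ^ (Fintype.card V) *
          poissonExp lam (fun m => (flowCountMxy s t m x y q : ℝ)) := by
  classical
  haveI : NeZero q := ⟨by omega⟩
  have hlam0 : ∀ e, 0 ≤ lam e := fun e => (hlam e) ▸ mul_nonneg hβ.le (hJ e)
  -- per-edge Poisson-type series
  have hgsum : ∀ (σ : V → Fin q) (e : E), Summable fun n : ℕ =>
      |Real.exp (-lam e) * lam e ^ n / (n.factorial : ℝ) *
        ((q:ℝ) * (if σ (s e) = σ (t e) then 1 else 0) - 1) ^ n| := by
    intro σ e
    have h := (Real.summable_pow_div_factorial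
      (lam e * |(q:ℝ) * (if σ (s e) = σ (t e) then 1 else 0) - 1|)).mul_left
      (Real.exp (-lam e))
    refine h.congr fun n => ?_
    rw [abs_mul, abs_pow,
      abs_of_nonneg (div_nonneg (mul_nonneg (Real.exp_nonneg _) (pow_nonneg (hlam0 e) n))
        (Nat.cast_nonneg _))]
    ring
  have hgtsum : ∀ (σ : V → Fin q) (e : E),
      (∑' n : ℕ, Real.exp (-lam e) * lam e ^ n / (n.factorial : ℝ) *
        ((q:ℝ) * (if σ (s e) = σ (t e) then 1 else 0) - 1) ^ n)
      = Real.exp (-lam e) * Real.exp (lam e *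
          ((q:ℝ) * (if σ (s e) = σ (t e) then 1 else 0) - 1)) := by
    intro σ e
    have hexp : Real.exp (lam e * ((q:ℝ) * (if σ (s e) = σ (t e) then 1 else 0) - 1))
        = ∑' n : ℕ, (lam e * ((q:ℝ) * (if σ (s e) = σ (t e) then 1 else 0) - 1)) ^ n
            / (n.factorial : ℝ) := by
      rw [Real.exp_eq_exp_ℝ, NormedSpace.exp_eq_tsum_div]
    rw [hexp, ← tsum_mul_left]
    exact tsum_congr fun n => by rw [mul_pow]; ring
  -- step A : the Potts weights factorise into per-edge exponential series
  have hA : ∀ σ : V → Fin q, Real.exp (-(β * ∑ e, J e)) * pottsWt s t q β J σ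
      = ∏ e, ∑' n : ℕ, Real.exp (-lam e) * lam e ^ n / (n.factorial : ℝ) *
          ((q:ℝ) * (if σ (s e) = σ (t e) then 1 else 0) - 1) ^ n := by
    intro σ
    rw [pottsWt, ← Real.exp_add]
    have hsum : -(β * ∑ e, J e) + ∑ e, β * J e *
        ((q:ℝ) * (if σ (s e) = σ (t e) then 1 else 0) - 1)
        = ∑ e, (lam e * ((q:ℝ) * (if σ (s e) = σ (t e) then 1 else 0) - 1) - lam e) := by
      simp only [hlam, Finset.sum_sub_distrib, Finset.mul_sum]
      ring
    rw [hsum, Real.exp_sum]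
    refine Finset.prod_congr rfl fun e _ => ?_
    rw [hgtsum σ e, ← Real.exp_add]
    congr 1
    ring
  -- step C : interchange product and sums
  have hC : ∀ σ : V → Fin q, (∏ e, ∑' n : ℕ,
        Real.exp (-lam e) * lam e ^ n / (n.factorial : ℝ) *
          ((q:ℝ) * (if σ (s e) = σ (t e) then 1 else 0) - 1) ^ n)
      = ∑' m : E → ℕ, ∏ e, Real.exp (-lam e) * lam e ^ (m e) / ((m e).factorial : ℝ) *
          ((q:ℝ) * (if σ (s e) = σ (t e) then 1 else 0) - 1) ^ (m e) :=
    fun σ => ((pi_tsum_prod'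
      (fun e n => Real.exp (-lam e) * lam e ^ n / (n.factorial : ℝ) *
        ((q:ℝ) * (if σ (s e) = σ (t e) then 1 else 0) - 1) ^ n) (hgsum σ)).2).symm
  have hCsum : ∀ σ : V → Fin q, Summable (fun m : E → ℕ =>
      ∏ e, Real.exp (-lam e) * lam e ^ (m e) / ((m e).factorial : ℝ) *
        ((q:ℝ) * (if σ (s e) = σ (t e) then 1 else 0) - 1) ^ (m e)) :=
    fun σ => ((pi_tsum_prod'
      (fun e n => Real.exp (-lam e) * lam e ^ n / (n.factorial : ℝ) *
        ((q:ℝ) * (if σ (s e) = σ (t e) then 1 else 0) - 1) ^ n) (hgsum σ)).1).of_abs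
  calc Real.exp (-(β * ∑ e, J e)) *
      (∑ σ : V → Fin q, ((q : ℝ) * (if σ x = σ y then 1 else 0) - 1) * pottsWt s t q β J σ)
      = ∑ σ : V → Fin q, ((q : ℝ) * (if σ x = σ y then 1 else 0) - 1) *
          (Real.exp (-(β * ∑ e, J e)) * pottsWt s t q β J σ) := by
        rw [Finset.mul_sum]
        exact Finset.sum_congr rfl fun σ _ => by ring
    _ = ∑ σ : V → Fin q, ((q : ℝ) * (if σ x = σ y then 1 else 0) - 1) *
          ∑' m : E → ℕ, ∏ e, Real.exp (-lam e) * lam e ^ (m e) / ((m e).factorial : ℝ) *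
            ((q:ℝ) * (if σ (s e) = σ (t e) then 1 else 0) - 1) ^ (m e) :=
        Finset.sum_congr rfl fun σ _ => by rw [hA σ, hC σ]
    _ = ∑ σ : V → Fin q, ∑' m : E → ℕ,
          ((q : ℝ) * (if σ x = σ y then 1 else 0) - 1) *
          ∏ e, Real.exp (-lam e) * lam e ^ (m e) / ((m e).factorial : ℝ) *
            ((q:ℝ) * (if σ (s e) = σ (t e) then 1 else 0) - 1) ^ (m e) :=
        Finset.sum_congr rfl fun σ _ => (tsum_mul_left).symm
    _ = ∑' m : E → ℕ, ∑ σ : V → Fin q,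
          ((q : ℝ) * (if σ x = σ y then 1 else 0) - 1) *
          ∏ e, Real.exp (-lam e) * lam e ^ (m e) / ((m e).factorial : ℝ) *
            ((q:ℝ) * (if σ (s e) = σ (t e) then 1 else 0) - 1) ^ (m e) :=
        (Summable.tsum_finsetSum fun σ _ => ((hCsum σ).mul_left _)).symm
    _ = ∑' m : E → ℕ, (q : ℝ) ^ (Fintype.card V) *
          (poissonWt lam m * (flowCountMxy s t m x y q : ℝ)) := by
        refine tsum_congr fun m => ?_
        have hfac : ∀ σ : V → Fin q,
            (∏ e, Real.exp (-lam e) * lam e ^ (m e) / ((m e).factorial : ℝ) *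
              ((q:ℝ) * (if σ (s e) = σ (t e) then 1 else 0) - 1) ^ (m e))
            = poissonWt lam m *
              ∏ e, ((q:ℝ) * (if σ (s e) = σ (t e) then 1 else 0) - 1) ^ (m e) := by
          intro σ
          rw [poissonWt, ← Finset.prod_mul_distrib]
        have : (∑ σ : V → Fin q,
            ((q : ℝ) * (if σ x = σ y then 1 else 0) - 1) *
            ∏ e, Real.exp (-lam e) * lam e ^ (m e) / ((m e).factorial : ℝ) *
              ((q:ℝ) * (if σ (s e) = σ (t e) then 1 else 0) - 1) ^ (m e))
            = poissonWt lam m * ∑ σ : V → Fin q,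
              (((q : ℝ) * (if σ x = σ y then 1 else 0) - 1) *
              ∏ e, ((q:ℝ) * (if σ (s e) = σ (t e) then 1 else 0) - 1) ^ (m e)) := by
          rw [Finset.mul_sum]
          exact Finset.sum_congr rfl fun σ _ => by rw [hfac σ]; ring
        rw [this, key_real' s t q x y m]
        ring
    _ = (q : ℝ) ^ (Fintype.card V) *
          poissonExp lam (fun m => (flowCountMxy s t m x y q : ℝ)) := by
        rw [poissonExp, ← tsum_mul_left]
end

section
/- Let G=(V,E) be a finite graph without loops, p ∈ [0,1), and let λ ≥ 0 satisfy p = 1 − e^{−2λ}. Then φ_p(2^{k(ω)}) := Σ_{ω∈{0,1}^E} p^{|η(ω)|}(1−p)^{|E∖η(ω)|} 2^{k(ω)} = 2^{|V|} P_λ(G_P is even). -/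
open scoped BigOperators symmDiff Classical

section AuxLemmas

open Finset

/-- Product over a finite Pi type of summable sequences: `HasSum` version. -/
private lemma hasSum_pi_prod_fin : ∀ (n : ℕ) (f : Fin n → ℕ → ℝ),
    (∀ i, Summable fun k => |f i k|) →
    HasSum (fun m : Fin n → ℕ => ∏ i, f i (m i)) (∏ i, ∑' k, f i k) := by
  intro n
  induction n with
  | zero =>
    intro f _
    have h := hasSum_fintype (fun m : Fin 0 → ℕ => ∏ i, f i (m i))
    simpa using h
  | succ n ih =>
    intro f hf
    have h0 : HasSum (f 0) (∑' k, f 0 k) := (summable_abs_iff.mp (hf 0)).hasSum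
    have ht := ih (fun i k => f i.succ k) fun i => hf i.succ
    have habs := ih (fun i k => |f i.succ k|) fun i => by simpa [abs_abs] using hf i.succ
    have hsum : Summable fun x : ℕ × (Fin n → ℕ) => f 0 x.1 * ∏ i, f i.succ (x.2 i) := by
      rw [← summable_abs_iff]
      have h1 := (hf 0).mul_of_nonneg habs.summable (fun k => abs_nonneg _)
        fun m => Finset.prod_nonneg fun i _ => abs_nonneg _
      refine h1.congr fun x => ?_
      rw [abs_mul, Finset.abs_prod]
    have hmul := h0.mul ht hsum
    refine (Equiv.hasSum_iff (Fin.consEquiv fun _ : Fin (n + 1) => ℕ)).mp ?_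
    have he : ((fun m : Fin (n + 1) → ℕ => ∏ i, f i (m i)) ∘
          (Fin.consEquiv fun _ : Fin (n + 1) => ℕ))
        = fun x : ℕ × (Fin n → ℕ) => f 0 x.1 * ∏ i, f i.succ (x.2 i) := by
      funext x
      simp [Fin.consEquiv, Fin.prod_univ_succ]
    rw [he, Fin.prod_univ_succ]
    exact hmul

private lemma hasSum_pi_prod {ι : Type} [Fintype ι] (f : ι → ℕ → ℝ)
    (hf : ∀ i, Summable fun k => |f i k|) :
    HasSum (fun m : ι → ℕ => ∏ i, f i (m i)) (∏ i, ∑' k, f i k) := by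
  classical
  set n := Fintype.card ι
  obtain e : ι ≃ Fin n := Fintype.equivFin ι
  have h := hasSum_pi_prod_fin n (fun j k => f (e.symm j) k) fun j => hf _
  set E' : (ι → ℕ) ≃ (Fin n → ℕ) := Equiv.arrowCongr e (Equiv.refl ℕ) with hE
  have hval : (∏ i, ∑' k, f i k) = ∏ j, ∑' k, f (e.symm j) k :=
    (Equiv.prod_comp e.symm fun i => ∑' k, f i k).symm
  rw [hval]
  refine (Equiv.hasSum_iff E'.symm).mp ?_
  have hfun : ((fun m : ι → ℕ => ∏ i, f i (m i)) ∘ E'.symm)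
      = fun m' : Fin n → ℕ => ∏ j, f (e.symm j) (m' j) := by
    funext m'
    show (∏ i, f i ((E'.symm m') i)) = ∏ j, f (e.symm j) (m' j)
    rw [← Equiv.prod_comp e.symm fun i => f i ((E'.symm m') i)]
    refine Finset.prod_congr rfl fun j _ => ?_
    congr 1
    show m' (e (e.symm j)) = m' j
    rw [Equiv.apply_symm_apply]
  rw [hfun]
  exact h

/-- `2 ^ (number of components)` counts `Bool`-colourings constant on components. -/
private lemma two_pow_numComp {V E : Type} [Fintype V] [DecidableEq V] [Fintype E] (s t : E → V)
    (pred : E → Prop) :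
    (2 : ℝ) ^ numComp s t pred
      = ∑ σ : V → Bool, (if ∀ e, pred e → σ (s e) = σ (t e) then (1 : ℝ) else 0) := by
  classical
  set G := openGraph s t pred with hG
  have hreach : ∀ (σ : V → Bool), (∀ e, pred e → σ (s e) = σ (t e)) →
      ∀ v w : V, G.Reachable v w → σ v = σ w := by
    intro σ hσ v w hvw
    have hw : ∀ {a b : V} (_ : G.Walk a b), σ a = σ b := by
      intro a b pwalk
      induction pwalk with
      | nil => rfl
      | cons hadj ptail ih =>
        refine Eq.trans ?_ ih
        rw [hG, openGraph, SimpleGraph.fromRel_adj] at hadj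
        obtain ⟨-, h | h⟩ := hadj
        · obtain ⟨e, hp, hs, ht⟩ := h
          rw [← hs, ← ht]; exact hσ e hp
        · obtain ⟨e, hp, hs, ht⟩ := h
          rw [← hs, ← ht]; exact (hσ e hp).symm
    exact hvw.elim fun pw => hw pw
  have hadj' : ∀ e, pred e → G.connectedComponentMk (s e) = G.connectedComponentMk (t e) := by
    intro e hp
    by_cases h : s e = t e
    · rw [h]
    · refine SimpleGraph.ConnectedComponent.sound ?_
      refine SimpleGraph.Adj.reachable ?_
      rw [hG, openGraph, SimpleGraph.fromRel_adj]
      exact ⟨h, Or.inl ⟨e, hp, rfl, rfl⟩⟩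
  set myEquiv : {σ : V → Bool // ∀ e, pred e → σ (s e) = σ (t e)}
      ≃ (G.ConnectedComponent → Bool) :=
    { toFun := fun σ => Quot.lift σ.1 fun v w h => hreach σ.1 σ.2 v w h
      invFun := fun g => ⟨fun v => g (G.connectedComponentMk v),
        fun e hp => congrArg g (hadj' e hp)⟩
      left_inv := fun σ => rfl
      right_inv := fun g => by
        funext c
        induction c using SimpleGraph.ConnectedComponent.ind with
        | _ v => rfl } with hmE
  have h1 : Nat.card {σ : V → Bool // ∀ e, pred e → σ (s e) = σ (t e)}
      = 2 ^ numComp s t pred := by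
    rw [Nat.card_congr myEquiv, Nat.card_fun]
    have : Nat.card Bool = 2 := by simp [Nat.card_eq_fintype_card]
    rw [this]
    rfl
  rw [Finset.sum_boole, ← Fintype.card_subtype, ← Nat.card_eq_fintype_card, h1]
  push_cast
  rfl

/-- The spin sum detecting evenness. -/
private lemma sum_sigma_even {V E : Type} [Fintype V] [DecidableEq V] [Fintype E]
    (s t : E → V) (m : E → ℕ) :
    ∑ σ : V → Bool, ∏ e, (if σ (s e) = σ (t e) then (1 : ℝ) else -1) ^ m e
      = if IsEvenM s t m then (2 : ℝ) ^ Fintype.card V else 0 := by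
  classical
  have key : ∀ σ : V → Bool, (∏ e, (if σ (s e) = σ (t e) then (1 : ℝ) else -1) ^ m e)
      = ∏ v, (if σ v then (1 : ℝ) else -1) ^ mDeg s t m v := by
    intro σ
    set ε : V → ℝ := fun v => if σ v then (1 : ℝ) else -1 with hε
    have step1 : (∏ e, (if σ (s e) = σ (t e) then (1 : ℝ) else -1) ^ m e)
        = ∏ e, ε (s e) ^ m e * ε (t e) ^ m e := by
      refine Finset.prod_congr rfl fun e _ => ?_
      have h : (if σ (s e) = σ (t e) then (1 : ℝ) else -1) = ε (s e) * ε (t e) := by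
        cases hs' : σ (s e) <;> cases ht' : σ (t e) <;> simp [hε, hs', ht']
      rw [h, mul_pow]
    rw [step1]
    have step2 : ∀ v, ε v ^ mDeg s t m v
        = ∏ e, (if s e = v then ε v ^ m e else 1) * (if t e = v then ε v ^ m e else 1) := by
      intro v
      rw [mDeg, ← Finset.prod_pow_eq_pow_sum]
      refine Finset.prod_congr rfl fun e _ => ?_
      by_cases h1 : s e = v <;> by_cases h2 : t e = v <;>
        simp [h1, h2, pow_add, Nat.mul_add, pow_mul] <;> ring_nf <;>
        simp [pow_add]
    rw [Finset.prod_congr rfl fun v _ => step2 v, Finset.prod_comm]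
    refine Finset.prod_congr rfl fun e _ => ?_
    rw [Finset.prod_mul_distrib]
    have hs : (∏ v, if s e = v then ε v ^ m e else 1) = ε (s e) ^ m e := by
      rw [Finset.prod_ite_eq]; simp
    have ht : (∏ v, if t e = v then ε v ^ m e else 1) = ε (t e) ^ m e := by
      rw [Finset.prod_ite_eq]; simp
    rw [hs, ht]
  rw [Finset.sum_congr rfl fun σ _ => key σ]
  have hswap := Finset.prod_univ_sum (fun _ : V => (Finset.univ : Finset Bool))
    (fun v b => (if b then (1 : ℝ) else -1) ^ mDeg s t m v)
  rw [Fintype.piFinset_univ] at hswap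
  rw [← hswap]
  by_cases h : IsEvenM s t m
  · rw [if_pos h]
    have : ∀ v : V, (∑ b : Bool, (if b then (1 : ℝ) else -1) ^ mDeg s t m v) = 2 := by
      intro v
      rw [Fintype.sum_bool]
      simp [(h v).neg_one_pow]
      norm_num
    rw [Finset.prod_congr rfl fun v _ => this v, Finset.prod_const, Finset.card_univ]
  · rw [if_neg h]
    rw [IsEvenM, not_forall] at h
    obtain ⟨v, hv⟩ := h
    refine Finset.prod_eq_zero (Finset.mem_univ v) ?_
    rw [Fintype.sum_bool]
    have hodd : Odd (mDeg s t m v) := Nat.not_even_iff_odd.mp hv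
    simp [hodd.neg_one_pow]

private lemma poisson_tsum_sign (lam : ℝ) (c : ℝ) :
    ∑' n : ℕ, Real.exp (-lam) * lam ^ n / (Nat.factorial n) * c ^ n
      = Real.exp (lam * c - lam) := by
  have h1 : ∀ n : ℕ, Real.exp (-lam) * lam ^ n / (Nat.factorial n) * c ^ n
      = Real.exp (-lam) * ((lam * c) ^ n / (Nat.factorial n)) := by
    intro n; rw [mul_pow]; ring
  rw [tsum_congr h1, tsum_mul_left]
  have h2 : ∑' n : ℕ, (lam * c) ^ n / (Nat.factorial n) = Real.exp (lam * c) := by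
    rw [Real.exp_eq_exp_ℝ, NormedSpace.exp_eq_tsum_div]
  rw [h2, ← Real.exp_add]
  congr 1
  ring

end AuxLemmas

/-- `φ_p(2^{k(ω)}) = 2^{|V|} P_λ(G_P is even)`, where `p = 1 - e^{-2λ}`. -/
theorem perc_2k_eq_even_probability
    (V E : Type) [Fintype V] [DecidableEq V] [Fintype E]
    (s t : E → V) (hloop : ∀ e, s e ≠ t e)
    (p : ℝ) (hp0 : 0 ≤ p) (hp1 : p < 1)
    (lam : ℝ) (hlam : 0 ≤ lam) (hplam : p = 1 - Real.exp (-(2 * lam))) :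
    (∑ ω : E → Bool, percWt (fun _ => p) ω * (2 : ℝ) ^ numComp s t (fun e => ω e = true))
      = (2 : ℝ) ^ (Fintype.card V) * poissonProb (fun _ => lam) (fun m => IsEvenM s t m) := by
  classical
  have hL : (∑ ω : E → Bool, percWt (fun _ => p) ω * (2 : ℝ) ^ numComp s t fun e => ω e = true)
      = ∑ σ : V → Bool, ∏ e, (if σ (s e) = σ (t e) then (1 : ℝ) else 1 - p) := by
    have step1 : ∀ ω : E → Bool,
        percWt (fun _ => p) ω * (2 : ℝ) ^ numComp s t (fun e => ω e = true)
        = ∑ σ : V → Bool, percWt (fun _ => p) ω *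
            (if ∀ e, ω e = true → σ (s e) = σ (t e) then (1 : ℝ) else 0) := by
      intro ω
      rw [two_pow_numComp s t (fun e => ω e = true), Finset.mul_sum]
      refine Finset.sum_congr rfl fun σ _ => ?_
      congr
    rw [Finset.sum_congr rfl fun ω _ => step1 ω, Finset.sum_comm]
    refine Finset.sum_congr rfl fun σ _ => ?_
    have step2 : ∀ ω : E → Bool,
        percWt (fun _ => p) ω * (if ∀ e, ω e = true → σ (s e) = σ (t e) then (1 : ℝ) else 0)
        = ∏ e, ((if ω e then p else 1 - p) *
            (if ω e = true → σ (s e) = σ (t e) then (1 : ℝ) else 0)) := by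
      intro ω
      have hind : (if ∀ e, ω e = true → σ (s e) = σ (t e) then (1 : ℝ) else 0)
          = ∏ e, (if ω e = true → σ (s e) = σ (t e) then (1 : ℝ) else 0) := by
        rw [Finset.prod_boole]
        simp
      have hperc : percWt (fun _ => p) ω = ∏ e, (if ω e then p else 1 - p) := rfl
      rw [hperc, hind, ← Finset.prod_mul_distrib]
    rw [Finset.sum_congr rfl fun ω _ => step2 ω]
    have hswap := Finset.prod_univ_sum (fun _ : E => (Finset.univ : Finset Bool))
      (fun e b => (if b then p else 1 - p) *
        (if b = true → σ (s e) = σ (t e) then (1 : ℝ) else 0))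
    rw [Fintype.piFinset_univ] at hswap
    rw [← hswap]
    refine Finset.prod_congr rfl fun e _ => ?_
    rw [Fintype.sum_bool]
    by_cases h : σ (s e) = σ (t e)
    · simp [h]
    · simp [h]
  have habs : ∀ (c : ℝ), c = 1 ∨ c = -1 →
      Summable (fun n : ℕ => |Real.exp (-lam) * lam ^ n / (Nat.factorial n) * c ^ n|) := by
    intro c hc
    have heq : (fun n : ℕ => |Real.exp (-lam) * lam ^ n / (Nat.factorial n) * c ^ n|)
        = fun n : ℕ => Real.exp (-lam) * (lam ^ n / (Nat.factorial n)) := by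
      funext n
      have h1 : |c ^ n| = 1 := by rcases hc with h | h <;> simp [h, abs_pow]
      have h2 : (0 : ℝ) ≤ Real.exp (-lam) * lam ^ n / (Nat.factorial n) :=
        div_nonneg (mul_nonneg (Real.exp_nonneg _) (pow_nonneg hlam n)) (Nat.cast_nonneg _)
      rw [abs_mul, h1, mul_one, abs_of_nonneg h2]
      ring
    rw [heq]
    exact (Real.summable_pow_div_factorial lam).mul_left _
  have hR : (2 : ℝ) ^ Fintype.card V * poissonProb (fun _ => lam) (fun m => IsEvenM s t m)
      = ∑ σ : V → Bool, ∏ e, (if σ (s e) = σ (t e) then (1 : ℝ) else Real.exp (-(2 * lam))) := by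
    rw [poissonProb, ← tsum_mul_left]
    have hpt : ∀ m : E → ℕ,
        (2 : ℝ) ^ Fintype.card V *
          (poissonWt (fun _ => lam) m * (if IsEvenM s t m then (1 : ℝ) else 0))
        = ∑ σ : V → Bool, ∏ e, (Real.exp (-lam) * lam ^ m e / (Nat.factorial (m e)) *
            (if σ (s e) = σ (t e) then (1 : ℝ) else -1) ^ m e) := by
      intro m
      have hfac : ∀ σ : V → Bool,
          (∏ e, (Real.exp (-lam) * lam ^ m e / (Nat.factorial (m e)) *
            (if σ (s e) = σ (t e) then (1 : ℝ) else -1) ^ m e))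
          = poissonWt (fun _ => lam) m *
              ∏ e, (if σ (s e) = σ (t e) then (1 : ℝ) else -1) ^ m e := by
        intro σ
        rw [poissonWt, ← Finset.prod_mul_distrib]
      rw [Finset.sum_congr rfl fun σ _ => hfac σ, ← Finset.mul_sum, sum_sigma_even s t m]
      by_cases h : IsEvenM s t m
      · rw [if_pos h, if_pos h]; ring
      · rw [if_neg h, if_neg h]; ring
    rw [tsum_congr hpt]
    have hsummable : ∀ σ : V → Bool, ∀ e : E,
        Summable fun n : ℕ => |Real.exp (-lam) * lam ^ n / (Nat.factorial n) *
          (if σ (s e) = σ (t e) then (1 : ℝ) else -1) ^ n| := by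
      intro σ e
      refine habs _ ?_
      by_cases h : σ (s e) = σ (t e) <;> simp [h]
    have hkey : ∀ σ : V → Bool,
        HasSum (fun m : E → ℕ => ∏ e, (Real.exp (-lam) * lam ^ m e / (Nat.factorial (m e)) *
            (if σ (s e) = σ (t e) then (1 : ℝ) else -1) ^ m e))
          (∏ e, ∑' n : ℕ, Real.exp (-lam) * lam ^ n / (Nat.factorial n) *
            (if σ (s e) = σ (t e) then (1 : ℝ) else -1) ^ n) := fun σ =>
      hasSum_pi_prod (fun e n => Real.exp (-lam) * lam ^ n / (Nat.factorial n) *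
        (if σ (s e) = σ (t e) then (1 : ℝ) else -1) ^ n) (hsummable σ)
    rw [Summable.tsum_finsetSum fun σ _ => (hkey σ).summable]
    refine Finset.sum_congr rfl fun σ _ => ?_
    rw [(hkey σ).tsum_eq]
    refine Finset.prod_congr rfl fun e _ => ?_
    rw [poisson_tsum_sign]
    by_cases h : σ (s e) = σ (t e)
    · rw [if_pos h, if_pos h, show lam * 1 - lam = 0 by ring, Real.exp_zero]
    · rw [if_neg h, if_neg h, show lam * (-1) - lam = -(2 * lam) by ring]
  rw [hL, hR]
  refine Finset.sum_congr rfl fun σ _ => Finset.prod_congr rfl fun e _ => ?_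
  have h2 : (1 : ℝ) - p = Real.exp (-(2 * lam)) := by rw [hplam]; ring
  rw [h2]
end
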